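/- arXiv:2506.11904 — 4 statements merged into one kernel-verified Lean document; each statement's English description precedes it below -/
import Mathlib

section
/- (Robbins–Siegmund) Let (Ω, Σ, P) be a probability space with a filtration (𝓕_t)_{t≥0}, and let (V_t), (f_t), (g_t), (h_t) be stochastic processes taking values in [0,∞), adapted to (𝓕_t), with each V_t integrable, satisfying E[V_{t+1} | 𝓕_t] ≤ (1 + f_t) V_t + g_t − h_t almost surely for every t. If Σ_{t=0}^∞ f_t < ∞ and Σ_{t=0}^∞ g_t < ∞ almost surely, then almost surely lim_{t→∞} V_t exists (so (V_t) is bounded almost surely) and Σ_{t=0}^∞ h_t < ∞. -/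
/-!
With `A_t = ∏_{s<t} (1 + f_s)`, the discounted process
`X_t = V_t / A_t + ∑_{s<t} (h_s - g_s) / A_{s+1}` is a supermartingale. When `∑ f` and `∑ g` are
bounded by a constant `C`, it is bounded below by `-C`, hence converges almost surely. Pathwise,
`A_t` and `∑ g_s / A_{s+1}` converge, so convergence of `X` bounds `∑ h_s / A_{s+1}`, and then
`V_t = A_t (X_t - ∑_{s<t} (h_s - g_s) / A_{s+1})` converges too. The general case follows by
truncating all processes once `∑_{s≤t} f_s` or `∑_{s≤t} g_s` exceeds `n`, which is decided at
time `t`, and letting `n → ∞` through the integers.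
-/

open MeasureTheory Filter Finset Topology

section Deterministic

variable {v f g h : ℕ → ℝ}

def compoundFactor (f : ℕ → ℝ) (t : ℕ) : ℝ := ∏ s ∈ range t, (1 + f s)

lemma compoundFactor_succ (f : ℕ → ℝ) (t : ℕ) :
    compoundFactor f (t + 1) = compoundFactor f t * (1 + f t) :=
  prod_range_succ _ _

lemma one_le_compoundFactor (hf : ∀ s, 0 ≤ f s) (t : ℕ) : 1 ≤ compoundFactor f t :=
  one_le_prod fun s _ => le_add_of_nonneg_right (hf s)

lemma compoundFactor_pos (hf : ∀ s, 0 ≤ f s) (t : ℕ) : 0 < compoundFactor f t :=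
  zero_lt_one.trans_le (one_le_compoundFactor hf t)

lemma tendsto_compoundFactor (hf : Summable f) :
    Tendsto (compoundFactor f) atTop (𝓝 (∏' s, (1 + f s))) :=
  (Real.multipliable_one_add_of_summable hf).tendsto_prod_tprod_nat

lemma norm_inv_compoundFactor_le_one (hf : ∀ s, 0 ≤ f s) (t : ℕ) :
    ‖(compoundFactor f t)⁻¹‖ ≤ 1 := by
  rw [Real.norm_of_nonneg (inv_nonneg.2 (compoundFactor_pos hf t).le)]
  exact inv_le_one_of_one_le₀ (one_le_compoundFactor hf t)

lemma inv_compoundFactor_mul_le (hf : ∀ s, 0 ≤ f s) {x : ℝ} (hx : 0 ≤ x) (t : ℕ) :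
    (compoundFactor f t)⁻¹ * x ≤ x :=
  mul_le_of_le_one_left hx (inv_le_one_of_one_le₀ (one_le_compoundFactor hf t))

noncomputable def discountedDrift (f g h : ℕ → ℝ) (t : ℕ) : ℝ :=
  ∑ s ∈ range t, (compoundFactor f (s + 1))⁻¹ * (h s - g s)

noncomputable def robbinsSiegmundSeq (v f g h : ℕ → ℝ) (t : ℕ) : ℝ :=
  (compoundFactor f t)⁻¹ * v t + discountedDrift f g h t

lemma inv_compoundFactor_mul_add_discountedDrift_le (hf₀ : ∀ s, 0 ≤ f s) {t : ℕ} {y : ℝ}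
    (hy : y ≤ (1 + f t) * v t + g t - h t) :
    (compoundFactor f (t + 1))⁻¹ * y + discountedDrift f g h (t + 1) ≤
      robbinsSiegmundSeq v f g h t := by
  have hA := compoundFactor_pos hf₀ t
  have hft : 0 < 1 + f t := by linarith [hf₀ t]
  calc _ ≤ (compoundFactor f (t + 1))⁻¹ * ((1 + f t) * v t + g t - h t)
        + discountedDrift f g h (t + 1) := by
        gcongr
        exact inv_nonneg.2 (compoundFactor_pos hf₀ _).le
    _ = robbinsSiegmundSeq v f g h t := by
        rw [robbinsSiegmundSeq, discountedDrift, sum_range_succ, ← discountedDrift,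
          compoundFactor_succ]
        field_simp
        ring

lemma neg_sum_range_le_robbinsSiegmundSeq (hv : ∀ t, 0 ≤ v t) (hf₀ : ∀ t, 0 ≤ f t)
    (hg₀ : ∀ t, 0 ≤ g t) (hh₀ : ∀ t, 0 ≤ h t) (t : ℕ) :
    -∑ s ∈ range t, g s ≤ robbinsSiegmundSeq v f g h t := by
  have hterm : ∀ s, -g s ≤ (compoundFactor f (s + 1))⁻¹ * (h s - g s) := fun s => by
    have hpos := inv_nonneg.2 (compoundFactor_pos hf₀ (s + 1)).le
    nlinarith [inv_compoundFactor_mul_le hf₀ (hg₀ s) (s + 1), mul_nonneg hpos (hh₀ s)]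
  rw [robbinsSiegmundSeq, discountedDrift, ← sum_neg_distrib]
  linarith [sum_le_sum fun s (_ : s ∈ range t) => hterm s,
    mul_nonneg (inv_nonneg.2 (compoundFactor_pos hf₀ t).le) (hv t)]

theorem exists_tendsto_and_summable_of_tendsto_robbinsSiegmundSeq (hv : ∀ t, 0 ≤ v t)
    (hf₀ : ∀ t, 0 ≤ f t) (hg₀ : ∀ t, 0 ≤ g t) (hh₀ : ∀ t, 0 ≤ h t) (hf : Summable f)
    (hg : Summable g) {c : ℝ} (hx : Tendsto (robbinsSiegmundSeq v f g h) atTop (𝓝 c)) :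
    (∃ l, Tendsto v atTop (𝓝 l)) ∧ Summable h := by
  have ha : Tendsto (compoundFactor f) atTop (𝓝 (∏' s, (1 + f s))) := tendsto_compoundFactor hf
  obtain ⟨B, hB⟩ := ha.bddAbove_range
  obtain ⟨M, hM⟩ := hx.bddAbove_range
  set γ : ℕ → ℝ := fun s => (compoundFactor f (s + 1))⁻¹ * g s
  set θ : ℕ → ℝ := fun s => (compoundFactor f (s + 1))⁻¹ * h s
  have hθ₀ : ∀ s, 0 ≤ θ s := fun s =>
    mul_nonneg (inv_nonneg.2 (compoundFactor_pos hf₀ _).le) (hh₀ s)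
  have hγ_le : ∀ s, γ s ≤ g s := fun s => inv_compoundFactor_mul_le hf₀ (hg₀ s) _
  have hγ : Summable γ := hg.of_nonneg_of_le
    (fun s => mul_nonneg (inv_nonneg.2 (compoundFactor_pos hf₀ _).le) (hg₀ s)) hγ_le
  have hdrift : ∀ t, discountedDrift f g h t = ∑ s ∈ range t, θ s - ∑ s ∈ range t, γ s := by
    intro t
    simp only [discountedDrift, θ, γ, mul_sub, sum_sub_distrib]
  have hθ : Summable θ := by
    refine summable_of_sum_range_le (c := M + ∑' s, g s) hθ₀ fun t => ?_
    have hxt : robbinsSiegmundSeq v f g h t ≤ M := hM (Set.mem_range_self t)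
    have hvt : 0 ≤ (compoundFactor f t)⁻¹ * v t :=
      mul_nonneg (inv_nonneg.2 (compoundFactor_pos hf₀ _).le) (hv t)
    have hγt : ∑ s ∈ range t, γ s ≤ ∑' s, g s :=
      (sum_le_sum fun s _ => hγ_le s).trans (hg.sum_le_tsum _ fun s _ => hg₀ s)
    rw [robbinsSiegmundSeq, hdrift] at hxt
    linarith
  constructor
  · have hθγ := hθ.hasSum.tendsto_sum_nat.sub hγ.hasSum.tendsto_sum_nat
    refine ⟨_, (ha.mul (hx.sub hθγ)).congr fun t => ?_⟩
    rw [← hdrift, robbinsSiegmundSeq, add_sub_cancel_right,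
      mul_inv_cancel_left₀ (compoundFactor_pos hf₀ t).ne']
  · refine (hθ.mul_left B).of_nonneg_of_le hh₀ fun s => ?_
    calc h s = compoundFactor f (s + 1) * θ s :=
          (mul_inv_cancel_left₀ (compoundFactor_pos hf₀ _).ne' _).symm
      _ ≤ B * θ s := mul_le_mul_of_nonneg_right (hB (Set.mem_range_self _)) (hθ₀ s)

end Deterministic

section Stochastic

variable {Ω : Type*} {mΩ : MeasurableSpace Ω} {𝓕 : Filtration ℕ mΩ} {P : Measure Ω}

theorem MeasureTheory.Supermartingale.exists_ae_tendsto_of_const_le [IsFiniteMeasure P]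
    {X : ℕ → Ω → ℝ} (hX : Supermartingale X 𝓕 P) {c : ℝ} (hc : ∀ t ω, c ≤ X t ω) :
    ∀ᵐ ω ∂P, ∃ l, Tendsto (X · ω) atTop (𝓝 l) := by
  have hbdd : ∀ t, eLpNorm ((-X) t) 1 P ≤
      (ENNReal.ofReal (∫ ω, X 0 ω ∂P + P.real Set.univ * (2 * |c|))).toNNReal := by
    intro t
    rw [ENNReal.coe_toNNReal ENNReal.ofReal_ne_top, Pi.neg_apply, eLpNorm_neg,
      eLpNorm_one_eq_lintegral_enorm, ← ofReal_integral_norm_eq_lintegral_enorm (hX.integrable t)]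
    refine ENNReal.ofReal_le_ofReal ?_
    calc ∫ ω, ‖X t ω‖ ∂P ≤ ∫ ω, (X t ω + 2 * |c|) ∂P :=
          integral_mono (hX.integrable t).norm ((hX.integrable t).add (integrable_const _))
            fun ω => by
              rw [Real.norm_eq_abs, abs_le]
              constructor <;> linarith [hc t ω, neg_abs_le c, le_abs_self c]
      _ = ∫ ω, X t ω ∂P + P.real Set.univ * (2 * |c|) := by
          rw [integral_add (hX.integrable t) (integrable_const _), integral_const, smul_eq_mul]
      _ ≤ ∫ ω, X 0 ω ∂P + P.real Set.univ * (2 * |c|) := by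
          have := hX.setIntegral_le (Nat.zero_le t) MeasurableSet.univ
          rw [setIntegral_univ, setIntegral_univ] at this
          linarith
  filter_upwards [hX.neg.exists_ae_tendsto_of_bdd hbdd] with ω ⟨l, hl⟩
  exact ⟨-l, by simpa using hl.neg⟩

variable {V f g h : ℕ → Ω → ℝ}

lemma measurable_compoundFactor {m : MeasurableSpace Ω} {k : ℕ}
    (hf : ∀ s < k, Measurable[m] (f s)) : Measurable[m] fun ω => compoundFactor (f · ω) k :=
  Finset.measurable_prod _ fun s hs => measurable_const.add (hf s (mem_range.1 hs))

lemma measurable_discountedDrift {m : MeasurableSpace Ω} {k : ℕ}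
    (hf : ∀ s < k, Measurable[m] (f s)) (hg : ∀ s < k, Measurable[m] (g s))
    (hh : ∀ s < k, Measurable[m] (h s)) :
    Measurable[m] fun ω => discountedDrift (f · ω) (g · ω) (h · ω) k :=
  Finset.measurable_sum _ fun s hs =>
    have hs : s < k := mem_range.1 hs
    (measurable_compoundFactor fun r hr => hf r (by omega)).inv.mul ((hh s hs).sub (hg s hs))

lemma integrable_inv_compoundFactor_mul (hf₀ : ∀ t ω, 0 ≤ f t ω) (hf : ∀ t, Measurable (f t))
    {q : Ω → ℝ} (hq : Integrable q P) (k : ℕ) :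
    Integrable (fun ω => (compoundFactor (f · ω) k)⁻¹ * q ω) P :=
  hq.bdd_mul (measurable_compoundFactor fun s _ => hf s).inv.aestronglyMeasurable
    (ae_of_all _ fun ω => norm_inv_compoundFactor_le_one (hf₀ · ω) k)

noncomputable def robbinsSiegmundProcess (V f g h : ℕ → Ω → ℝ) (t : ℕ) (ω : Ω) : ℝ :=
  robbinsSiegmundSeq (V · ω) (f · ω) (g · ω) (h · ω) t

lemma adapted_robbinsSiegmundProcess (hV : Adapted 𝓕 V) (hf : Adapted 𝓕 f) (hg : Adapted 𝓕 g)
    (hh : Adapted 𝓕 h) : Adapted 𝓕 (robbinsSiegmundProcess V f g h) := fun t =>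
  ((measurable_compoundFactor fun _ hs => hf.measurable_le hs.le).inv.mul (hV t)).add
    (measurable_discountedDrift (fun _ hs => hf.measurable_le hs.le)
      (fun _ hs => hg.measurable_le hs.le) (fun _ hs => hh.measurable_le hs.le))

structure RobbinsSiegmundCondition (P : Measure Ω) (𝓕 : Filtration ℕ mΩ)
    (V f g h : ℕ → Ω → ℝ) : Prop where
  V_nonneg : ∀ t ω, 0 ≤ V t ω
  f_nonneg : ∀ t ω, 0 ≤ f t ω
  g_nonneg : ∀ t ω, 0 ≤ g t ω
  h_nonneg : ∀ t ω, 0 ≤ h t ω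
  adapted_V : Adapted 𝓕 V
  adapted_f : Adapted 𝓕 f
  adapted_g : Adapted 𝓕 g
  adapted_h : Adapted 𝓕 h
  integrable_V : ∀ t, Integrable (V t) P
  condExp_le : ∀ t, ∀ᵐ ω ∂P, P[V (t + 1)|𝓕 t] ω ≤ (1 + f t ω) * V t ω + g t ω - h t ω

namespace RobbinsSiegmundCondition

/-- Where `S (t + 1)` fails, the truncated inequality reduces to `0 ≤ (S t).indicator (V t)`. -/
theorem indicator (H : RobbinsSiegmundCondition P 𝓕 V f g h) {S : ℕ → Set Ω}
    (hS : Antitone S) (hS_meas : ∀ t, MeasurableSet[𝓕 t] (S t))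
    (hS_pred : ∀ t, MeasurableSet[𝓕 t] (S (t + 1))) :
    RobbinsSiegmundCondition P 𝓕 (fun t => (S t).indicator (V t))
      (fun t => (S (t + 1)).indicator (f t)) (fun t => (S (t + 1)).indicator (g t))
      (fun t => (S (t + 1)).indicator (h t)) where
  V_nonneg t := Set.indicator_nonneg fun ω _ => H.V_nonneg t ω
  f_nonneg t := Set.indicator_nonneg fun ω _ => H.f_nonneg t ω
  g_nonneg t := Set.indicator_nonneg fun ω _ => H.g_nonneg t ω
  h_nonneg t := Set.indicator_nonneg fun ω _ => H.h_nonneg t ω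
  adapted_V t := (H.adapted_V t).indicator (hS_meas t)
  adapted_f t := (H.adapted_f t).indicator (hS_pred t)
  adapted_g t := (H.adapted_g t).indicator (hS_pred t)
  adapted_h t := (H.adapted_h t).indicator (hS_pred t)
  integrable_V t := (H.integrable_V t).indicator (𝓕.le t _ (hS_meas t))
  condExp_le t := by
    filter_upwards [condExp_indicator (H.integrable_V (t + 1)) (hS_pred t), H.condExp_le t]
      with ω hind hle
    rw [hind]
    by_cases hω : ω ∈ S (t + 1)
    · simp only [Set.indicator_of_mem hω, Set.indicator_of_mem (hS t.le_succ hω)]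
      exact hle
    · simp only [Set.indicator_of_notMem hω]
      linarith [Set.indicator_nonneg (fun ω _ => H.V_nonneg t ω) ω (s := S t)]

variable [IsFiniteMeasure P] {C : ℝ}

lemma integrable_g (H : RobbinsSiegmundCondition P 𝓕 V f g h) (hg_le : ∀ t ω, g t ω ≤ C)
    (t : ℕ) : Integrable (g t) P :=
  (integrable_const C).mono' ((H.adapted_g t).mono (𝓕.le t) le_rfl).aestronglyMeasurable
    (ae_of_all _ fun ω => (Real.norm_of_nonneg (H.g_nonneg t ω)).trans_le (hg_le t ω))

lemma integrable_h (H : RobbinsSiegmundCondition P 𝓕 V f g h) (hf_le : ∀ t ω, f t ω ≤ C)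
    (hg_le : ∀ t ω, g t ω ≤ C) (t : ℕ) : Integrable (h t) P := by
  refine (((H.integrable_V t).const_mul (1 + C)).add (integrable_const C)).mono'
    ((H.adapted_h t).mono (𝓕.le t) le_rfl).aestronglyMeasurable ?_
  filter_upwards [H.condExp_le t, condExp_nonneg (m := 𝓕 t) (ae_of_all P (H.V_nonneg (t + 1)))]
    with ω hle hnonneg
  have hfV : (1 + f t ω) * V t ω ≤ (1 + C) * V t ω :=
    mul_le_mul_of_nonneg_right (by linarith [hf_le t ω]) (H.V_nonneg t ω)
  rw [Real.norm_of_nonneg (H.h_nonneg t ω)]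
  simp only [Pi.add_apply, Pi.zero_apply] at hnonneg ⊢
  linarith [hg_le t ω]

lemma supermartingale_robbinsSiegmundProcess (H : RobbinsSiegmundCondition P 𝓕 V f g h)
    (hf_le : ∀ t ω, f t ω ≤ C) (hg_le : ∀ t ω, g t ω ≤ C) :
    Supermartingale (robbinsSiegmundProcess V f g h) 𝓕 P := by
  have hf : ∀ t, Measurable (f t) := fun t => (H.adapted_f t).mono (𝓕.le t) le_rfl
  have hint_V : ∀ k, Integrable (fun ω => (compoundFactor (f · ω) k)⁻¹ * V k ω) P :=
    fun k => integrable_inv_compoundFactor_mul H.f_nonneg hf (H.integrable_V k) k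
  have hint_drift : ∀ k, Integrable (fun ω => discountedDrift (f · ω) (g · ω) (h · ω) k) P :=
    fun k => integrable_finsetSum _ fun s _ => integrable_inv_compoundFactor_mul H.f_nonneg hf
      ((H.integrable_h hf_le hg_le s).sub (H.integrable_g hg_le s)) (s + 1)
  refine supermartingale_nat (adapted_robbinsSiegmundProcess H.adapted_V H.adapted_f H.adapted_g
    H.adapted_h).stronglyAdapted (fun t => (hint_V t).add (hint_drift t)) fun t => ?_
  have hA : Measurable[𝓕 t] fun ω => (compoundFactor (f · ω) (t + 1))⁻¹ :=
    (measurable_compoundFactor fun _ hs => H.adapted_f.measurable_le (by omega)).inv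
  have hD : Measurable[𝓕 t] fun ω => discountedDrift (f · ω) (g · ω) (h · ω) (t + 1) :=
    measurable_discountedDrift (fun _ hs => H.adapted_f.measurable_le (by omega))
      (fun _ hs => H.adapted_g.measurable_le (by omega))
      (fun _ hs => H.adapted_h.measurable_le (by omega))
  filter_upwards [condExp_add (hint_V (t + 1)) (hint_drift (t + 1)) (𝓕 t),
    condExp_stronglyMeasurable_mul_of_bound (𝓕.le t) hA.stronglyMeasurable
      (H.integrable_V (t + 1)) 1
      (ae_of_all _ fun ω => norm_inv_compoundFactor_le_one (H.f_nonneg · ω) (t + 1)),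
    H.condExp_le t] with ω hadd hmul hle
  have hsplit : robbinsSiegmundProcess V f g h (t + 1) =
      (fun ω => (compoundFactor (f · ω) (t + 1))⁻¹ * V (t + 1) ω)
        + fun ω => discountedDrift (f · ω) (g · ω) (h · ω) (t + 1) := rfl
  rw [hsplit, hadd, Pi.add_apply, condExp_of_stronglyMeasurable (𝓕.le t) hD.stronglyMeasurable
    (hint_drift _)]
  exact (congrArg (· + _) hmul).trans_le
    (inv_compoundFactor_mul_add_discountedDrift_le (H.f_nonneg · ω) hle)

theorem ae_tendsto_and_summable_of_sum_le (H : RobbinsSiegmundCondition P 𝓕 V f g h)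
    (hfC : ∀ t ω, ∑ s ∈ range t, f s ω ≤ C) (hgC : ∀ t ω, ∑ s ∈ range t, g s ω ≤ C) :
    ∀ᵐ ω ∂P, (∃ l, Tendsto (V · ω) atTop (𝓝 l)) ∧ Summable (h · ω) := by
  have hf_le : ∀ t ω, f t ω ≤ C := fun t ω =>
    (single_le_sum (fun s _ => H.f_nonneg s ω) (self_mem_range_succ t)).trans (hfC (t + 1) ω)
  have hg_le : ∀ t ω, g t ω ≤ C := fun t ω =>
    (single_le_sum (fun s _ => H.g_nonneg s ω) (self_mem_range_succ t)).trans (hgC (t + 1) ω)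
  have hX_ge : ∀ t ω, -C ≤ robbinsSiegmundProcess V f g h t ω := fun t ω =>
    (neg_le_neg (hgC t ω)).trans (neg_sum_range_le_robbinsSiegmundSeq (H.V_nonneg · ω)
      (H.f_nonneg · ω) (H.g_nonneg · ω) (H.h_nonneg · ω) t)
  filter_upwards [(H.supermartingale_robbinsSiegmundProcess hf_le hg_le
    ).exists_ae_tendsto_of_const_le hX_ge] with ω ⟨_, hX⟩
  exact exists_tendsto_and_summable_of_tendsto_robbinsSiegmundSeq (H.V_nonneg · ω)
    (H.f_nonneg · ω) (H.g_nonneg · ω) (H.h_nonneg · ω)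
    (summable_of_sum_range_le (H.f_nonneg · ω) (hfC · ω))
    (summable_of_sum_range_le (H.g_nonneg · ω) (hgC · ω)) hX

end RobbinsSiegmundCondition

def partialSumsLeSet (f g : ℕ → Ω → ℝ) (C : ℝ) (t : ℕ) : Set Ω :=
  {ω | ∑ s ∈ range t, f s ω ≤ C ∧ ∑ s ∈ range t, g s ω ≤ C}

lemma antitone_partialSumsLeSet (hf : ∀ t ω, 0 ≤ f t ω) (hg : ∀ t ω, 0 ≤ g t ω) (C : ℝ) :
    Antitone (partialSumsLeSet f g C) := fun _ _ hst _ ⟨hfω, hgω⟩ =>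
  ⟨(sum_le_sum_of_subset_of_nonneg (range_subset_range.2 hst) fun s _ _ => hf s _).trans hfω,
    (sum_le_sum_of_subset_of_nonneg (range_subset_range.2 hst) fun s _ _ => hg s _).trans hgω⟩

lemma measurableSet_partialSumsLeSet (hf : Adapted 𝓕 f) (hg : Adapted 𝓕 g) (C : ℝ) {k t : ℕ}
    (hk : k ≤ t + 1) : MeasurableSet[𝓕 t] (partialSumsLeSet f g C k) :=
  have hsum : ∀ {u : ℕ → Ω → ℝ}, Adapted 𝓕 u → Measurable[𝓕 t] fun ω => ∑ s ∈ range k, u s ω :=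
    fun hu => Finset.measurable_sum _ fun s hs => hu.measurable_le (by simp at hs; omega)
  (measurableSet_le (hsum hf) measurable_const).inter (measurableSet_le (hsum hg) measurable_const)

lemma sum_range_indicator_le {p : ℕ → Ω → ℝ} {S : ℕ → Set Ω} {C : ℝ} (hS : Antitone S)
    (hC : 0 ≤ C) (hpS : ∀ t, ∀ ω ∈ S t, ∑ s ∈ range t, p s ω ≤ C) (T : ℕ) (ω : Ω) :
    ∑ s ∈ range T, (S (s + 1)).indicator (p s) ω ≤ C := by
  induction T with
  | zero => simpa using hC
  | succ T ih =>
    by_cases hω : ω ∈ S (T + 1)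
    · rw [sum_congr rfl fun s hs => Set.indicator_of_mem
        (hS (by simpa using mem_range.1 hs) hω) (p s)]
      exact hpS _ ω hω
    · rwa [sum_range_succ, Set.indicator_of_notMem hω, add_zero]

theorem RobbinsSiegmundCondition.ae_tendsto_and_summable_of_mem_partialSumsLeSet
    [IsFiniteMeasure P] (H : RobbinsSiegmundCondition P 𝓕 V f g h) {C : ℝ} (hC : 0 ≤ C) :
    ∀ᵐ ω ∂P, (∀ t, ω ∈ partialSumsLeSet f g C t) →
      (∃ l, Tendsto (V · ω) atTop (𝓝 l)) ∧ Summable (h · ω) := by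
  have hS := antitone_partialSumsLeSet H.f_nonneg H.g_nonneg C
  have HS := H.indicator hS
    (fun t => measurableSet_partialSumsLeSet H.adapted_f H.adapted_g C t.le_succ)
    (fun t => measurableSet_partialSumsLeSet H.adapted_f H.adapted_g C le_rfl)
  filter_upwards [HS.ae_tendsto_and_summable_of_sum_le
    (sum_range_indicator_le hS hC fun _ _ hω => hω.1)
    (sum_range_indicator_le hS hC fun _ _ hω => hω.2)] with ω hω hmem
  simpa only [Set.indicator_of_mem (hmem _)] using hω

end Stochastic

/-- Robbins–Siegmund theorem: if `(V_t), (f_t), (g_t), (h_t)` are nonnegative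
adapted processes with `V_t` integrable and
`E[V_{t+1} | 𝓕_t] ≤ (1 + f_t) V_t + g_t - h_t` a.s. for every `t`, and if
`Σ f_t < ∞` and `Σ g_t < ∞` a.s., then a.s. `V_t` converges (hence is bounded)
and `Σ h_t < ∞`. -/
theorem stmt_9 {Ω : Type*} {mΩ : MeasurableSpace Ω} (P : Measure Ω)
    [IsProbabilityMeasure P] (𝓕 : Filtration ℕ mΩ)
    (V f g h : ℕ → Ω → ℝ)
    (hVnn : ∀ t ω, 0 ≤ V t ω) (hfnn : ∀ t ω, 0 ≤ f t ω)
    (hgnn : ∀ t ω, 0 ≤ g t ω) (hhnn : ∀ t ω, 0 ≤ h t ω)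
    (hVadp : Adapted 𝓕 V) (hfadp : Adapted 𝓕 f)
    (hgadp : Adapted 𝓕 g) (hhadp : Adapted 𝓕 h)
    (hVint : ∀ t, Integrable (V t) P)
    (hineq : ∀ t, ∀ᵐ ω ∂P,
      (P[V (t + 1)|𝓕 t]) ω ≤ (1 + f t ω) * V t ω + g t ω - h t ω)
    (hf : ∀ᵐ ω ∂P, Summable (fun t => f t ω))
    (hg : ∀ᵐ ω ∂P, Summable (fun t => g t ω)) :
    ∀ᵐ ω ∂P, (∃ l : ℝ, Tendsto (fun t => V t ω) atTop (nhds l)) ∧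
      Summable (fun t => h t ω) := by
  have H : RobbinsSiegmundCondition P 𝓕 V f g h :=
    ⟨hVnn, hfnn, hgnn, hhnn, hVadp, hfadp, hgadp, hhadp, hVint, hineq⟩
  filter_upwards [hf, hg, ae_all_iff.2 fun n : ℕ =>
    H.ae_tendsto_and_summable_of_mem_partialSumsLeSet n.cast_nonneg] with ω hfω hgω hω
  obtain ⟨n, hn⟩ := exists_nat_ge (max (∑' t, f t ω) (∑' t, g t ω))
  exact hω n fun t =>
    ⟨(hfω.sum_le_tsum _ fun s _ => hfnn s ω).trans ((le_max_left _ _).trans hn),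
      (hgω.sum_le_tsum _ fun s _ => hgnn s ω).trans ((le_max_right _ _).trans hn)⟩
end

section
/- Let (Ω, Σ, P) be a probability space with a filtration (𝓕_t)_{t≥0}, and let (V_t), (f_t), (g_t), (h_t), (α_t) be stochastic processes taking values in [0,∞), adapted to (𝓕_t), with each V_t integrable, satisfying E[V_{t+1} | 𝓕_t] ≤ (1 + f_t) V_t + g_t − α_t h_t almost surely for every t. (1) If Σ_{t=0}^∞ f_t < ∞ and Σ_{t=0}^∞ g_t < ∞ almost surely, then (V_t) is bounded almost surely and there exists a random variable W such that V_t → W almost surely. (2) If in addition Σ_{t=0}^∞ α_t = ∞ almost surely, then liminf_{t→∞} h_t = 0 almost surely. -/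
/-!
Since `V, g ≥ 0`, one has `(1 + f) V + g + 1 ≤ (1 + f + g) (V + 1)`, so after replacing `V` by
`U = V + 1` and `f` by `f + g` the additive term disappears. With the discount
`D_t = ∏_{s<t} (1 + f_s)⁻¹`, the process `X_t = D_t U_t + ∑_{s<t} D_{s+1} α_s h_s` is then a
nonnegative supermartingale; all its terms are integrable because the drift inequality gives
`D_{s+1} α_s h_s ≤ D_s U_s ≤ U_s`. So `X` converges a.s. Where `∑ f_t + g_t < ∞` the discount
decreases to a positive limit, so both `U_t` and the nondecreasing sum `∑ D_{s+1} α_s h_s`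
converge: `V_t` converges and `∑ α_t h_t < ∞`, which is incompatible with `∑ α_t = ∞` unless
`liminf h_t = 0`.
-/

open MeasureTheory Filter Topology Finset

theorem liminf_eq_zero_of_summable_mul {α h : ℕ → ℝ} (hα : ∀ s, 0 ≤ α s) (hh : ∀ s, 0 ≤ h s)
    (hαh : Summable fun s => α s * h s)
    (hdiv : Tendsto (fun n => ∑ t ∈ range n, α t) atTop atTop) :
    liminf h atTop = 0 := by
  have hlow : ∀ c, (∀ᶠ t in atTop, c ≤ h t) → c ≤ 0 := by
    intro c hc
    by_contra! hcpos
    have hα_sum : Summable α := by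
      refine .of_norm_bounded_eventually_nat (hαh.div_const c) ?_
      filter_upwards [hc] with t ht
      rw [Real.norm_of_nonneg (hα t), le_div_iff₀ hcpos]
      exact mul_le_mul_of_nonneg_left ht (hα t)
    exact not_tendsto_atTop_of_tendsto_nhds hα_sum.hasSum.tendsto_sum_nat hdiv
  have h0 : ∀ᶠ t in atTop, (0 : ℝ) ≤ h t := .of_forall hh
  rw [liminf_eq]
  exact le_antisymm (csSup_le ⟨0, h0⟩ hlow) (le_csSup ⟨0, hlow⟩ h0)

section Supermartingale

variable {Ω : Type*} {mΩ : MeasurableSpace Ω} {P : Measure Ω} {𝓕 : Filtration ℕ mΩ}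

theorem MeasureTheory.Supermartingale.exists_ae_tendsto_of_nonneg [IsFiniteMeasure P]
    {X : ℕ → Ω → ℝ} (hX : Supermartingale X 𝓕 P) (hnn : ∀ t, 0 ≤ᵐ[P] X t) :
    ∀ᵐ ω ∂P, ∃ c, Tendsto (fun t => X t ω) atTop (𝓝 c) := by
  have hbdd : ∀ t, eLpNorm ((-X) t) 1 P ≤ ENNReal.ofReal (∫ ω, X 0 ω ∂P) := by
    intro t
    have hint : ∫ ω, X t ω ∂P ≤ ∫ ω, X 0 ω ∂P := by
      simpa using hX.setIntegral_le (Nat.zero_le t) MeasurableSet.univ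
    rw [Pi.neg_apply, eLpNorm_neg, eLpNorm_one_eq_lintegral_enorm,
      ← ofReal_integral_norm_eq_lintegral_enorm (hX.integrable t)]
    refine ENNReal.ofReal_le_ofReal (le_of_eq_of_le (integral_congr_ae ?_) hint)
    filter_upwards [hnn t] with ω hω using Real.norm_of_nonneg hω
  filter_upwards [hX.neg.exists_ae_tendsto_of_bdd hbdd] with ω ⟨c, hc⟩
  exact ⟨-c, by simpa using hc.neg⟩

end Supermartingale

namespace RobbinsSiegmund

noncomputable def discount (f : ℕ → ℝ) (t : ℕ) : ℝ := ∏ s ∈ range t, (1 + f s)⁻¹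

section Discount

variable {f : ℕ → ℝ}

lemma discount_pos (hf : ∀ s, 0 ≤ f s) (t : ℕ) : 0 < discount f t :=
  prod_pos fun s _ => inv_pos.2 (by linarith [hf s])

lemma discount_le_one (hf : ∀ s, 0 ≤ f s) (t : ℕ) : discount f t ≤ 1 :=
  prod_le_one (fun s _ => (inv_pos.2 (by linarith [hf s])).le)
    fun s _ => inv_le_one_of_one_le₀ (by linarith [hf s])

lemma discount_succ_mul (hf : ∀ s, 0 ≤ f s) (t : ℕ) :
    discount f (t + 1) * (1 + f t) = discount f t := by
  rw [discount, prod_range_succ, mul_assoc, inv_mul_cancel₀ (by linarith [hf t]), mul_one,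
    discount]

lemma discount_antitone (hf : ∀ s, 0 ≤ f s) : Antitone (discount f) :=
  antitone_nat_of_succ_le fun t => by
    rw [← discount_succ_mul hf t]
    exact le_mul_of_one_le_right (discount_pos hf _).le (by linarith [hf t])

lemma exp_neg_tsum_le_discount (hf : ∀ s, 0 ≤ f s) (hfs : Summable f) (t : ℕ) :
    Real.exp (-∑' s, f s) ≤ discount f t :=
  calc Real.exp (-∑' s, f s) ≤ Real.exp (-∑ s ∈ range t, f s) :=
        Real.exp_le_exp.2 (neg_le_neg (hfs.sum_le_tsum _ fun s _ => hf s))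
    _ = ∏ s ∈ range t, (Real.exp (f s))⁻¹ := by
        rw [← sum_neg_distrib, Real.exp_sum]
        simp only [Real.exp_neg]
    _ ≤ discount f t := prod_le_prod (fun s _ => by positivity) fun s _ =>
        inv_anti₀ (by linarith [hf s]) (by linarith [Real.add_one_le_exp (f s)])

end Discount

theorem tendsto_and_summable_of_tendsto_discounted {f u a : ℕ → ℝ} (hf : ∀ s, 0 ≤ f s)
    (hfs : Summable f) (hu : ∀ t, 0 ≤ u t) (ha : ∀ s, 0 ≤ a s) {c : ℝ}
    (hc : Tendsto (fun t => discount f t * u t + ∑ s ∈ range t, discount f (s + 1) * a s)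
      atTop (𝓝 c)) :
    (∃ L, Tendsto u atTop (𝓝 L)) ∧ Summable a := by
  have he : 0 < Real.exp (-∑' s, f s) := Real.exp_pos _
  obtain ⟨M, hM⟩ := hc.bddAbove_range
  have hDa : Summable fun s => discount f (s + 1) * a s :=
    summable_of_sum_range_le (fun s => mul_nonneg (discount_pos hf _).le (ha s)) fun t =>
      (le_add_of_nonneg_left (mul_nonneg (discount_pos hf t).le (hu t))).trans (hM ⟨t, rfl⟩)
  have hD : Tendsto (discount f) atTop (𝓝 (⨅ t, discount f t)) :=
    tendsto_atTop_ciInf (discount_antitone hf)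
      ⟨_, Set.forall_mem_range.2 (exp_neg_tsum_le_discount hf hfs)⟩
  have hDinf : 0 < ⨅ t, discount f t := he.trans_le (le_ciInf (exp_neg_tsum_le_discount hf hfs))
  refine ⟨⟨_, ((hc.sub hDa.hasSum.tendsto_sum_nat).div hD hDinf.ne').congr fun t => ?_⟩, ?_⟩
  · simp only [Pi.div_apply, add_sub_cancel_right]
    exact mul_div_cancel_left₀ _ (discount_pos hf t).ne'
  · refine .of_nonneg_of_le ha (fun s => ?_) (hDa.div_const (Real.exp (-∑' s, f s)))
    rw [le_div_iff₀ he, mul_comm]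
    exact mul_le_mul_of_nonneg_right (exp_neg_tsum_le_discount hf hfs _) (ha s)

section Discounted

variable {Ω : Type*} {mΩ : MeasurableSpace Ω} {P : Measure Ω} {𝓕 : Filtration ℕ mΩ}

noncomputable def discountedProcess (U f a : ℕ → Ω → ℝ) (t : ℕ) (ω : Ω) : ℝ :=
  discount (f · ω) t * U t ω + ∑ s ∈ range t, discount (f · ω) (s + 1) * a s ω

variable {U f a : ℕ → Ω → ℝ}

lemma measurable_discount (hf : StronglyAdapted 𝓕 f) {n t : ℕ} (ht : t ≤ n + 1) :
    Measurable[𝓕 n] fun ω => discount (f · ω) t :=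
  Finset.measurable_prod _ fun s hs => by
    have hsn : s ≤ n := by have := mem_range.1 hs; omega
    exact (measurable_const.add (hf.stronglyMeasurable_le hsn).measurable).inv

lemma integrable_discount_mul (hf : ∀ t ω, 0 ≤ f t ω) (hfadp : StronglyAdapted 𝓕 f)
    (hU : ∀ t ω, 0 ≤ U t ω) (hUadp : StronglyAdapted 𝓕 U) (hUint : ∀ t, Integrable (U t) P)
    (t : ℕ) : Integrable (fun ω => discount (f · ω) t * U t ω) P := by
  refine (hUint t).mono' (((measurable_discount hfadp (Nat.le_succ t)).mul
    (hUadp t).measurable).mono (𝓕.le t) le_rfl).aestronglyMeasurable (.of_forall fun ω => ?_)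
  rw [Real.norm_of_nonneg (mul_nonneg (discount_pos (hf · ω) t).le (hU t ω))]
  exact mul_le_of_le_one_left (hU t ω) (discount_le_one (hf · ω) t)

lemma integrable_discount_succ_mul (hf : ∀ t ω, 0 ≤ f t ω) (hfadp : StronglyAdapted 𝓕 f)
    (hU : ∀ t ω, 0 ≤ U t ω) (hUint : ∀ t, Integrable (U t) P)
    (ha : ∀ t ω, 0 ≤ a t ω) (haadp : StronglyAdapted 𝓕 a)
    (hdrift : ∀ t, ∀ᵐ ω ∂P, P[U (t + 1)|𝓕 t] ω ≤ (1 + f t ω) * U t ω - a t ω) (t : ℕ) :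
    Integrable (fun ω => discount (f · ω) (t + 1) * a t ω) P := by
  refine (hUint t).mono' (((measurable_discount hfadp le_rfl).mul
    (haadp t).measurable).mono (𝓕.le t) le_rfl).aestronglyMeasurable ?_
  filter_upwards [hdrift t, condExp_nonneg (m := 𝓕 t) (.of_forall (hU (t + 1)))]
    with ω hω hcond
  have hcond' : (0 : ℝ) ≤ P[U (t + 1)|𝓕 t] ω := hcond
  have hD := discount_pos (hf · ω)
  rw [Real.norm_of_nonneg (mul_nonneg (hD _).le (ha t ω))]
  calc discount (f · ω) (t + 1) * a t ω
      ≤ discount (f · ω) (t + 1) * ((1 + f t ω) * U t ω) :=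
        mul_le_mul_of_nonneg_left (by linarith) (hD _).le
    _ = discount (f · ω) t * U t ω := by rw [← mul_assoc, discount_succ_mul (hf · ω)]
    _ ≤ U t ω := mul_le_of_le_one_left (hU t ω) (discount_le_one (hf · ω) t)

lemma measurable_sum_discount_succ_mul (hfadp : StronglyAdapted 𝓕 f)
    (haadp : StronglyAdapted 𝓕 a) {n t : ℕ} (ht : t ≤ n + 1) :
    Measurable[𝓕 n] fun ω => ∑ s ∈ range t, discount (f · ω) (s + 1) * a s ω :=
  Finset.measurable_sum _ fun s hs => by
    have hsn : s ≤ n := by have := mem_range.1 hs; omega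
    exact (measurable_discount hfadp (by omega)).mul (haadp.stronglyMeasurable_le hsn).measurable

theorem supermartingale_discountedProcess [IsFiniteMeasure P]
    (hf : ∀ t ω, 0 ≤ f t ω) (hfadp : StronglyAdapted 𝓕 f)
    (hU : ∀ t ω, 0 ≤ U t ω) (hUadp : StronglyAdapted 𝓕 U) (hUint : ∀ t, Integrable (U t) P)
    (ha : ∀ t ω, 0 ≤ a t ω) (haadp : StronglyAdapted 𝓕 a)
    (hdrift : ∀ t, ∀ᵐ ω ∂P, P[U (t + 1)|𝓕 t] ω ≤ (1 + f t ω) * U t ω - a t ω) :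
    Supermartingale (discountedProcess U f a) 𝓕 P := by
  have hDU := integrable_discount_mul hf hfadp hU hUadp hUint
  have hDa := integrable_discount_succ_mul hf hfadp hU hUint ha haadp hdrift
  have hint : ∀ t, Integrable (discountedProcess U f a t) P := fun t =>
    (hDU t).add (integrable_finsetSum _ fun s _ => hDa s)
  refine supermartingale_nat (fun t => ?_) hint fun t => ?_
  · exact (((measurable_discount hfadp (Nat.le_succ t)).mul (hUadp t).measurable).add
      (measurable_sum_discount_succ_mul hfadp haadp (Nat.le_succ t))).stronglyMeasurable
  set S : Ω → ℝ := fun ω => ∑ s ∈ range (t + 1), discount (f · ω) (s + 1) * a s ω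
  have hS : StronglyMeasurable[𝓕 t] S :=
    (measurable_sum_discount_succ_mul hfadp haadp le_rfl).stronglyMeasurable
  have hSint : Integrable S P := integrable_finsetSum _ fun s _ => hDa s
  have hsplit : discountedProcess U f a (t + 1)
      = (fun ω => discount (f · ω) (t + 1)) * U (t + 1) + S := rfl
  have hcond : P[discountedProcess U f a (t + 1)|𝓕 t]
      =ᵐ[P] (fun ω => discount (f · ω) (t + 1)) * P[U (t + 1)|𝓕 t] + S := by
    calc P[discountedProcess U f a (t + 1)|𝓕 t]
        =ᵐ[P] P[(fun ω => discount (f · ω) (t + 1)) * U (t + 1)|𝓕 t] + P[S|𝓕 t] := by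
          rw [hsplit]; exact condExp_add (hDU (t + 1)) hSint _
      _ =ᵐ[P] (fun ω => discount (f · ω) (t + 1)) * P[U (t + 1)|𝓕 t] + S := by
          rw [condExp_of_stronglyMeasurable (𝓕.le t) hS hSint]
          exact (condExp_mul_of_stronglyMeasurable_left
            (measurable_discount hfadp le_rfl).stronglyMeasurable (hDU (t + 1))
            (hUint (t + 1))).add (.refl _ _)
  filter_upwards [hcond, hdrift t] with ω hω hdω
  rw [hω]
  simp only [Pi.add_apply, Pi.mul_apply, S, discountedProcess, sum_range_succ]
  have h := mul_le_mul_of_nonneg_left hdω (discount_pos (hf · ω) (t + 1)).le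
  rw [mul_sub, ← mul_assoc, discount_succ_mul (hf · ω)] at h
  linarith

theorem ae_tendsto_and_summable_of_condExp_le [IsFiniteMeasure P]
    (hf : ∀ t ω, 0 ≤ f t ω) (hfadp : StronglyAdapted 𝓕 f)
    (hU : ∀ t ω, 0 ≤ U t ω) (hUadp : StronglyAdapted 𝓕 U) (hUint : ∀ t, Integrable (U t) P)
    (ha : ∀ t ω, 0 ≤ a t ω) (haadp : StronglyAdapted 𝓕 a)
    (hdrift : ∀ t, ∀ᵐ ω ∂P, P[U (t + 1)|𝓕 t] ω ≤ (1 + f t ω) * U t ω - a t ω)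
    (hfs : ∀ᵐ ω ∂P, Summable (f · ω)) :
    ∀ᵐ ω ∂P, (∃ L, Tendsto (U · ω) atTop (𝓝 L)) ∧ Summable (a · ω) := by
  have hX := supermartingale_discountedProcess hf hfadp hU hUadp hUint ha haadp hdrift
  have hXnn : ∀ t, 0 ≤ᵐ[P] discountedProcess U f a t := fun t => .of_forall fun ω =>
    add_nonneg (mul_nonneg (discount_pos (hf · ω) t).le (hU t ω))
      (sum_nonneg fun s _ => mul_nonneg (discount_pos (hf · ω) _).le (ha s ω))
  filter_upwards [hX.exists_ae_tendsto_of_nonneg hXnn, hfs] with ω ⟨c, hc⟩ hω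
  exact tendsto_and_summable_of_tendsto_discounted (hf · ω) hω (hU · ω) (ha · ω) hc

end Discounted

end RobbinsSiegmund

/-- Extension of the Robbins–Siegmund theorem: if `(V_t), (f_t), (g_t), (h_t), (α_t)`
are nonnegative adapted processes with `V_t` integrable and
`E[V_{t+1} | 𝓕_t] ≤ (1 + f_t) V_t + g_t - α_t h_t` a.s. for every `t`, then:
(1) if `Σ f_t < ∞` and `Σ g_t < ∞` a.s., then `(V_t)` is bounded a.s. and there is a
random variable `W` with `V_t → W` a.s.;
(2) if in addition `Σ α_t = ∞` a.s., then `liminf h_t = 0` a.s. -/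
theorem stmt_10 {Ω : Type*} {mΩ : MeasurableSpace Ω} (P : Measure Ω)
    [IsProbabilityMeasure P] (𝓕 : Filtration ℕ mΩ)
    (V f g h α : ℕ → Ω → ℝ)
    (hVnn : ∀ t ω, 0 ≤ V t ω) (hfnn : ∀ t ω, 0 ≤ f t ω)
    (hgnn : ∀ t ω, 0 ≤ g t ω) (hhnn : ∀ t ω, 0 ≤ h t ω)
    (hαnn : ∀ t ω, 0 ≤ α t ω)
    (hVadp : StronglyAdapted 𝓕 V) (hfadp : StronglyAdapted 𝓕 f)
    (hgadp : StronglyAdapted 𝓕 g) (hhadp : StronglyAdapted 𝓕 h) (hαadp : StronglyAdapted 𝓕 α)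
    (hVint : ∀ t, Integrable (V t) P)
    (hineq : ∀ t, ∀ᵐ ω ∂P,
      (P[V (t + 1)|𝓕 t]) ω ≤ (1 + f t ω) * V t ω + g t ω - α t ω * h t ω)
    (hf : ∀ᵐ ω ∂P, Summable (fun t => f t ω))
    (hg : ∀ᵐ ω ∂P, Summable (fun t => g t ω)) :
    ((∀ᵐ ω ∂P, BddAbove (Set.range fun t => V t ω)) ∧
      ∃ W : Ω → ℝ, ∀ᵐ ω ∂P, Tendsto (fun t => V t ω) atTop (nhds (W ω))) ∧
    ((∀ᵐ ω ∂P, Tendsto (fun n => ∑ t ∈ Finset.range n, α t ω) atTop atTop) →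
      ∀ᵐ ω ∂P, Filter.liminf (fun t => h t ω) atTop = 0) := by
  have hdrift : ∀ t, ∀ᵐ ω ∂P, P[fun ω => V (t + 1) ω + 1|𝓕 t] ω
      ≤ (1 + (f t ω + g t ω)) * (V t ω + 1) - α t ω * h t ω := by
    intro t
    filter_upwards [condExp_add (hVint (t + 1)) (integrable_const (1 : ℝ)) (𝓕 t), hineq t]
      with ω hadd hω
    rw [show (fun ω => V (t + 1) ω + 1) = V (t + 1) + fun _ => 1 from rfl, hadd, Pi.add_apply,
      condExp_const (𝓕.le t)]
    dsimp only
    nlinarith [hfnn t ω, mul_nonneg (hgnn t ω) (hVnn t ω)]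
  have hlim := RobbinsSiegmund.ae_tendsto_and_summable_of_condExp_le (U := fun t ω => V t ω + 1)
    (fun t ω => add_nonneg (hfnn t ω) (hgnn t ω)) (hfadp.add hgadp)
    (fun t ω => by linarith [hVnn t ω]) (hVadp.add (stronglyAdapted_const 𝓕 1))
    (fun t => (hVint t).add (integrable_const 1))
    (fun t ω => mul_nonneg (hαnn t ω) (hhnn t ω)) (hαadp.mul hhadp) hdrift
    (by filter_upwards [hf, hg] with ω hfω hgω using hfω.add hgω)
  have hV : ∀ᵐ ω ∂P, ∃ L, Tendsto (V · ω) atTop (𝓝 L) := by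
    filter_upwards [hlim] with ω ⟨⟨L, hL⟩, _⟩
    exact ⟨L - 1, by simpa using hL.sub_const 1⟩
  refine ⟨⟨?_, fun ω => limUnder atTop (V · ω), ?_⟩, fun hαdiv => ?_⟩
  · filter_upwards [hV] with ω ⟨L, hL⟩ using hL.bddAbove_range
  · filter_upwards [hV] with ω ⟨L, hL⟩ using hL.limUnder_eq.symm ▸ hL
  · filter_upwards [hlim, hαdiv] with ω hω hαω
    exact liminf_eq_zero_of_summable_mul (hαnn · ω) (hhnn · ω) hω.2 hαω
end

section
/- Let (μ_t)_{t≥0} be a real sequence with 0 < μ_t < 1 for all t and μ_t < μ_{t−1} for all t ≥ 1 (strictly decreasing). Define λ_0 = μ_0/(1 − μ_0) and λ_{t+1} = λ_t/μ_t − 1 for all t ≥ 0. Then λ_t → ∞ as t → ∞. -/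
open Filter

private lemma A_mono {a b : ℝ} (ha : 0 < a) (hab : a < b) (hb : b < 1) :
    a / (1 - a) < b / (1 - b) := by
  have h1 : 0 < 1 - a := by linarith
  have h2 : 0 < 1 - b := by linarith
  rw [div_lt_div_iff₀ h1 h2]
  nlinarith

/-- If `(μ_t)` is strictly decreasing with `0 < μ_t < 1`, and `λ_0 = μ_0/(1-μ_0)`,
`λ_{t+1} = λ_t/μ_t - 1`, then `λ_t → ∞`. -/
theorem stmt_13 (μ : ℕ → ℝ)
    (hμ0 : ∀ t, 0 < μ t) (hμ1 : ∀ t, μ t < 1)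
    (hdec : ∀ t, μ (t + 1) < μ t)
    (lam : ℕ → ℝ)
    (hlam0 : lam 0 = μ 0 / (1 - μ 0))
    (hrec : ∀ t, lam (t + 1) = lam t / μ t - 1) :
    Tendsto lam atTop atTop := by
  set A : ℕ → ℝ := fun t => μ t / (1 - μ t) with hA
  have h1μ : ∀ t, 0 < 1 - μ t := fun t => by linarith [hμ1 t]
  have hApos : ∀ t, 0 < A t := fun t => div_pos (hμ0 t) (h1μ t)
  have hAdec : ∀ t, A (t + 1) < A t := fun t => A_mono (hμ0 (t+1)) (hdec t) (hμ1 t)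
  set c : ℝ := A 0 - A 1 with hc
  have hcpos : 0 < c := by have := hAdec 0; simp only [hc]; linarith
  set r : ℝ := (μ 1)⁻¹ with hr
  have hrgt : 1 < r := (one_lt_inv₀ (hμ0 1)).mpr (hμ1 1)
  have hstrict : StrictAnti μ := strictAnti_nat_of_succ_lt hdec
  have hμle : ∀ n : ℕ, μ (n + 1) ≤ μ 1 := fun n =>
    hstrict.antitone (Nat.succ_le_succ (Nat.zero_le n))
  -- λ 1 = A 0
  have hlam1 : lam 1 = A 0 := by
    have h0 := (hμ0 0).ne'
    have h1 := (h1μ 0).ne'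
    simp only [hrec 0, hlam0, hA]
    field_simp
    ring
  -- key induction
  have key : ∀ n : ℕ, A (n + 1) + c * r ^ n ≤ lam (n + 1) := by
    intro n
    induction n with
    | zero => rw [hlam1]; simp only [pow_zero, mul_one, hc]; linarith
    | succ n ih =>
      have hμn := hμ0 (n + 1)
      have h1n := h1μ (n + 1)
      rw [hrec (n + 1)]
      have step1 : (A (n + 1) + c * r ^ n) / μ (n + 1) - 1 ≤ lam (n + 1) / μ (n + 1) - 1 := by
        gcongr
      refine le_trans ?_ step1
      have hAeq : A (n + 1) / μ (n + 1) - 1 = A (n + 1) := by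
        simp only [hA]
        field_simp
        ring
      have hrle : c * r ^ n * r ≤ c * r ^ n / μ (n + 1) := by
        rw [div_eq_mul_inv]
        have hpow : 0 < c * r ^ n := mul_pos hcpos (pow_pos (by linarith) n)
        have : r ≤ (μ (n + 1))⁻¹ := by
          rw [hr]
          exact inv_anti₀ hμn (hμle n)
        exact mul_le_mul_of_nonneg_left this hpow.le
      have : A (n + 1) + c * r ^ n / μ (n + 1) ≤ (A (n + 1) + c * r ^ n) / μ (n + 1) - 1 := by
        rw [add_div]
        linarith [hAeq]
      have hAd := hAdec (n + 1)
      calc A (n + 1 + 1) + c * r ^ (n + 1)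
          ≤ A (n + 1) + c * r ^ n / μ (n + 1) := by
            rw [pow_succ]; linarith
        _ ≤ (A (n + 1) + c * r ^ n) / μ (n + 1) - 1 := this
  have hlow : ∀ n : ℕ, c * r ^ n ≤ lam (n + 1) := fun n => by
    have := key n; have := hApos (n + 1); linarith
  have hgeo : Tendsto (fun n : ℕ => c * r ^ n) atTop atTop :=
    (tendsto_pow_atTop_atTop_of_one_lt hrgt).const_mul_atTop hcpos
  have hshift : Tendsto (fun n : ℕ => lam (n + 1)) atTop atTop :=
    tendsto_atTop_mono hlow hgeo
  exact (tendsto_add_atTop_iff_nat 1).mp hshift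
end

section
/- Let (w_t), (v_t), (h_{t+1}) be sequences of vectors in ℝ^d and (a_t), (b_t), (μ_t), (α_t) real sequences with μ_t ≠ 1 for all t, satisfying the update equations w_{t+1} = w_t + a_t v_t − b_t α_t h_{t+1} and v_{t+1} = μ_t v_t − α_t h_{t+1} for all t. Define k_t := a_t/(1 − μ_t), δ_t := k_{t+1} − k_t, and u_t := w_t + k_t v_t. Then for every t, u_{t+1} = u_t + δ_t μ_t v_t − (b_t + k_{t+1}) α_t h_{t+1}. -/
/-- Transformation of variables for the unified momentum algorithm: with
`k_t = a_t/(1-μ_t)`, `δ_t = k_{t+1} - k_t`, and `u_t = w_t + k_t v_t`, the updates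
`w_{t+1} = w_t + a_t v_t - b_t α_t h_{t+1}`, `v_{t+1} = μ_t v_t - α_t h_{t+1}`
imply `u_{t+1} = u_t + δ_t μ_t v_t - (b_t + k_{t+1}) α_t h_{t+1}`.
Here `h t` denotes `h_{t+1}`. -/
theorem stmt_16 {d : ℕ} (w v h : ℕ → EuclideanSpace ℝ (Fin d))
    (a b μ α : ℕ → ℝ) (hμ : ∀ t, μ t ≠ 1)
    (hwrec : ∀ t, w (t + 1) = w t + a t • v t - (b t * α t) • h t)
    (hvrec : ∀ t, v (t + 1) = μ t • v t - α t • h t)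
    (k δ : ℕ → ℝ) (u : ℕ → EuclideanSpace ℝ (Fin d))
    (hk : ∀ t, k t = a t / (1 - μ t))
    (hδ : ∀ t, δ t = k (t + 1) - k t)
    (hu : ∀ t, u t = w t + k t • v t) :
    ∀ t, u (t + 1) = u t + (δ t * μ t) • v t - ((b t + k (t + 1)) * α t) • h t := by
  intro t
  have h1 : (1 : ℝ) - μ t ≠ 0 := sub_ne_zero.mpr (fun e => hμ t e.symm)
  have key : a t = k t * (1 - μ t) := by rw [hk]; field_simp
  rw [hu, hu, hwrec, hvrec, hδ, key]
  module
end
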